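/- arXiv:1406.5261 — 4 statements merged into one kernel-verified Lean document; each statement's English description precedes it below -/
import Mathlib

section
/- Let Q : ⋯ → Q_i →^{d_i} Q_{i-1} → ⋯ → Q₀ →^{d₀} V → 0 be a (not necessarily exact) complex of R-modules with Q_i of type FP_{m-i} for all 0 ≤ i ≤ m, and suppose the homology H_i(Q) is of type FP_{m-i-1} for all 0 ≤ i ≤ m-1. Then V is of type FP_m. (Here d₀ is assumed surjective onto V.) -/
open CategoryTheory

/-- A module `M` over the associative unital ring `R` is of type `FP m` (for `m : ℤ`) if it
admits a projective resolution whose projective modules in degrees `≤ m` are finitely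
generated.  (For `m < 0` the condition is vacuous.) -/
def ModuleCat.IsFP (R : Type) [Ring R] (m : ℤ) (M : ModuleCat R) : Prop :=
  ∃ P : ProjectiveResolution M, ∀ i : ℕ, (i : ℤ) ≤ m → Module.Finite R (P.complex.X i)

/-- The homology of a complex at a given spot: `ker g / im f`, where `f : A → B`, `g : B → C`
and `g ∘ f = 0`. -/
def complexHomology (R : Type) [Ring R] {A B C : Type}
    [AddCommGroup A] [AddCommGroup B] [AddCommGroup C]
    [Module R A] [Module R B] [Module R C]
    (f : A →ₗ[R] B) (g : B →ₗ[R] C) : Type :=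
  LinearMap.ker g ⧸ (LinearMap.range f).comap (LinearMap.ker g).subtype

noncomputable instance (R : Type) [Ring R] {A B C : Type}
    [AddCommGroup A] [AddCommGroup B] [AddCommGroup C]
    [Module R A] [Module R B] [Module R C]
    (f : A →ₗ[R] B) (g : B →ₗ[R] C) : AddCommGroup (complexHomology R f g) :=
  inferInstanceAs (AddCommGroup (LinearMap.ker g ⧸ (LinearMap.range f).comap (LinearMap.ker g).subtype))

noncomputable instance (R : Type) [Ring R] {A B C : Type}
    [AddCommGroup A] [AddCommGroup B] [AddCommGroup C]
    [Module R A] [Module R B] [Module R C]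
    (f : A →ₗ[R] B) (g : B →ₗ[R] C) : Module R (complexHomology R f g) :=
  inferInstanceAs (Module R (LinearMap.ker g ⧸ (LinearMap.range f).comap (LinearMap.ker g).subtype))

/-!
Induct on `m`. Truncating the complex at `Q₁` gives a complex `⋯ → Q₂ → Q₁ → B₀ → 0` with
`B₀ = im d₁`, which satisfies the hypotheses for `m - 1`, so `B₀` is of type `FP_{m-1}`. With
`Z₀ = ker d₀`, the short exact sequence `0 → B₀ → Z₀ → H₀ → 0` and the horseshoe lemma make `Z₀`
of type `FP_{m-1}`, and then `0 → Z₀ → Q₀ → V → 0` makes `V` of type `FP_m`.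

These closure properties are proved for the recursive characterisation: `M` is of type `FP_{n+1}`
iff it is the image of a finitely generated projective module under a map whose kernel is of
type `FP_n`. It agrees with the definition by resolutions, which are spliced from such covers.
-/

open LinearMap

universe u

namespace LinearMap

variable {R : Type*} [Ring R] {A B C FA FC : Type*} [AddCommGroup A] [Module R A]
  [AddCommGroup B] [Module R B] [AddCommGroup C] [Module R C] [AddCommGroup FA] [Module R FA]
  [AddCommGroup FC] [Module R FC]
  {f : A →ₗ[R] B} {g : B →ₗ[R] C} {fA : FA →ₗ[R] A} {fC : FC →ₗ[R] C} {s : FC →ₗ[R] B}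

theorem surjective_coprod_of_exact (hfg : Function.Exact f g) (hA : Function.Surjective fA)
    (hC : Function.Surjective fC) (hs : g ∘ₗ s = fC) :
    Function.Surjective ((f ∘ₗ fA).coprod s) := by
  intro b
  obtain ⟨y, hy⟩ := hC (g b)
  obtain ⟨a, ha⟩ : b - s y ∈ range f := by
    rw [← exact_iff.mp hfg, mem_ker, map_sub, ← LinearMap.comp_apply, hs, hy, sub_self]
  obtain ⟨x, rfl⟩ := hA a
  exact ⟨(x, y), by simp [ha]⟩

theorem exists_shortExact_ker_coprod (hf : Function.Injective f) (hfg : Function.Exact f g)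
    (hA : Function.Surjective fA) (hs : g ∘ₗ s = fC) :
    ∃ (α : ker fA →ₗ[R] ker ((f ∘ₗ fA).coprod s)) (β : ker ((f ∘ₗ fA).coprod s) →ₗ[R] ker fC),
      Function.Injective α ∧ Function.Exact α β ∧ Function.Surjective β := by
  set φ := (f ∘ₗ fA).coprod s
  have hα : ∀ x ∈ ker fA, inl R FA FC x ∈ ker φ := fun x hx => by
    simp [φ, mem_ker.mp hx]
  have hβ : ∀ x ∈ ker φ, snd R FA FC x ∈ ker fC := fun x hx => by
    have := congrArg g (mem_ker.mp hx)
    rwa [coprod_apply, map_add, LinearMap.comp_apply, hfg.apply_apply_eq_zero, zero_add,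
      ← LinearMap.comp_apply, hs, map_zero] at this
  refine ⟨(inl R FA FC).restrict hα, (snd R FA FC).restrict hβ, ?_, ?_, ?_⟩
  · intro x y hxy
    exact Subtype.ext (congrArg (fun z : ker φ => (z : FA × FC).1) hxy)
  · rintro ⟨⟨x, y⟩, hxy⟩
    constructor
    · intro hy
      obtain rfl : y = 0 := congrArg Subtype.val hy
      have hx : fA x = 0 := hf (by simpa [φ] using hxy)
      exact ⟨⟨x, hx⟩, rfl⟩
    · rintro ⟨x', hx'⟩
      rw [← hx']
      rfl
  · rintro ⟨y, hy⟩
    obtain ⟨a, ha⟩ : s y ∈ range f := by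
      rw [← exact_iff.mp hfg, mem_ker, ← LinearMap.comp_apply, hs]
      exact hy
    obtain ⟨x, rfl⟩ := hA a
    exact ⟨⟨(-x, y), by simp [φ, ha]⟩, rfl⟩

end LinearMap

namespace Module

def IsFP (R : Type*) [Ring R] : ℕ → (M : Type u) → [AddCommGroup M] → [Module R M] → Prop
  | 0, M, _, _ => Module.Finite R M
  | n + 1, M, _, _ => ∃ (F : Type u) (_ : AddCommGroup F) (_ : Module R F) (π : F →ₗ[R] M),
      Module.Finite R F ∧ Module.Projective R F ∧ Function.Surjective π ∧ IsFP R n (ker π)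

section Closure

variable {R : Type*} [Ring R] {n : ℕ} {A B C : Type u} [AddCommGroup A] [Module R A]
  [AddCommGroup B] [Module R B] [AddCommGroup C] [Module R C]

theorem IsFP.of_exact {f : A →ₗ[R] B} {g : B →ₗ[R] C} (hf : Function.Injective f)
    (hfg : Function.Exact f g) (hg : Function.Surjective g)
    (hA : IsFP R n A) (hC : IsFP R n C) : IsFP R n B := by
  induction n generalizing A B C with
  | zero =>
    have : Module.Finite R A := hA
    have : Module.Finite R C := hC
    exact Module.Finite.of_exact hfg hg
  | succ n ih =>
    obtain ⟨FA, _, _, fA, hFA, _, hfA, hA⟩ := hA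
    obtain ⟨FC, _, _, fC, hFC, _, hfC, hC⟩ := hC
    obtain ⟨s, hs⟩ := Module.projective_lifting_property g fC hg
    obtain ⟨α, β, hα, hαβ, hβ⟩ := exists_shortExact_ker_coprod hf hfg hfA hs
    exact ⟨FA × FC, _, _, _, inferInstance, inferInstance,
      surjective_coprod_of_exact hfg hfA hfC hs, ih hα hαβ hβ hA hC⟩

theorem IsFP.of_surjective {g : B →ₗ[R] C} (hg : Function.Surjective g)
    (hB : IsFP R (n + 1) B) (hK : IsFP R n (ker g)) : IsFP R (n + 1) C := by
  obtain ⟨F, _, _, p, hF, hP, hp, hker⟩ := hB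
  refine ⟨F, _, _, g ∘ₗ p, hF, hP, hg.comp hp, ?_⟩
  have hι := ker_le_ker_comp p g
  have hτ : ∀ x ∈ ker (g ∘ₗ p), p x ∈ ker g := fun _ hx => hx
  refine hker.of_exact (Submodule.inclusion_injective hι) (g := p.restrict hτ) ?_ ?_ hK
  · rw [exact_iff, ker_restrict, Submodule.range_inclusion]
  · rintro ⟨k, hk⟩
    obtain ⟨x, rfl⟩ := hp k
    exact ⟨⟨x, hk⟩, rfl⟩

end Closure

theorem IsFP.of_complex {R : Type} [Ring R] (m : ℕ) {Q : ℕ → Type} [∀ i, AddCommGroup (Q i)]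
    [∀ i, Module R (Q i)] {V : Type} [AddCommGroup V] [Module R V]
    (q : ∀ i : ℕ, Q (i + 1) →ₗ[R] Q i) (ε : Q 0 →ₗ[R] V) (hε : Function.Surjective ε)
    (hc0 : ε ∘ₗ q 0 = 0) (hc : ∀ i : ℕ, q i ∘ₗ q (i + 1) = 0)
    (hQ : ∀ i ≤ m, IsFP R (m - i) (Q i))
    (hH0 : 1 ≤ m → IsFP R (m - 1) (complexHomology R (q 0) ε))
    (hH : ∀ i, i + 2 ≤ m → IsFP R (m - i - 2) (complexHomology R (q (i + 1)) (q i))) :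
    IsFP R m V := by
  induction m generalizing Q V with
  | zero =>
    have : Module.Finite R (Q 0) := hQ 0 le_rfl
    exact Module.Finite.of_surjective ε hε
  | succ m ih =>
    have hc0' : (q 0).rangeRestrict ∘ₗ q 1 = 0 := by
      ext x
      exact LinearMap.congr_fun (hc 0) x
    have hH0' : 1 ≤ m → IsFP R (m - 1) (complexHomology R (q 1) (q 0).rangeRestrict) := by
      intro hm
      show IsFP R (m - 1)
        (ker (q 0).rangeRestrict ⧸ (range (q 1)).comap (ker (q 0).rangeRestrict).subtype)
      rw [ker_rangeRestrict]
      exact hH 0 (by omega)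
    have hB : IsFP R m (range (q 0)) :=
      ih (Q := fun i => Q (i + 1)) (fun i => q (i + 1)) (q 0).rangeRestrict
        (q 0).surjective_rangeRestrict hc0' (fun i => hc (i + 1))
        (fun i hi => Nat.add_sub_add_right m 1 i ▸ hQ (i + 1) (by omega)) hH0'
        (fun i hi => Nat.add_sub_add_right m 1 i ▸ hH (i + 1) (by omega))
    have hle : range (q 0) ≤ ker ε := range_le_ker_iff.mpr hc0
    have hexact : Function.Exact (Submodule.inclusion hle)
        ((range (q 0)).comap (ker ε).subtype).mkQ := by
      rw [exact_iff, Submodule.ker_mkQ, Submodule.range_inclusion]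
    have hZ : IsFP R m (ker ε) :=
      hB.of_exact (Submodule.inclusion_injective hle) hexact (Submodule.mkQ_surjective _)
        (hH0 (by omega))
    exact (hQ 0 (by omega)).of_surjective hε hZ

/-- `⋯ → F 1 → F 0 → M → 0` as plain modules rather than a complex in `ModuleCat`, so that it
can be shifted and spliced by hand. -/
structure ProjResolution (R : Type*) [Ring R] (M : Type u) [AddCommGroup M] [Module R M] where
  F : ℕ → Type u
  [addCommGroup : ∀ i, AddCommGroup (F i)]
  [module : ∀ i, Module R (F i)]
  [projective : ∀ i, Module.Projective R (F i)]
  d : ∀ i, F (i + 1) →ₗ[R] F i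
  ε : F 0 →ₗ[R] M
  surjective_ε : Function.Surjective ε
  exact_zero : Function.Exact (d 0) ε
  exact_succ : ∀ i, Function.Exact (d (i + 1)) (d i)

attribute [instance] ProjResolution.addCommGroup ProjResolution.module ProjResolution.projective

namespace ProjResolution

section

variable {R : Type*} [Ring R] {M : Type u} [AddCommGroup M] [Module R M]

def shift (P : ProjResolution R M) : ProjResolution R (ker P.ε) where
  F i := P.F (i + 1)
  d i := P.d (i + 1)
  ε := (P.d 0).codRestrict (ker P.ε) P.exact_zero.apply_apply_eq_zero
  surjective_ε := by
    rintro ⟨x, hx⟩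
    obtain ⟨y, rfl⟩ := (P.exact_zero x).mp hx
    exact ⟨y, rfl⟩
  exact_zero := exact_iff.mpr ((ker_codRestrict _ _ _).trans (exact_iff.mp (P.exact_succ 0)))
  exact_succ i := P.exact_succ (i + 1)

def cons {F : Type u} [AddCommGroup F] [Module R F] [Module.Projective R F] (π : F →ₗ[R] M)
    (hπ : Function.Surjective π) (P : ProjResolution R (ker π)) : ProjResolution R M where
  F
    | 0 => F
    | i + 1 => P.F i
  addCommGroup
    | 0 => inferInstance
    | i + 1 => inferInstance
  module
    | 0 => inferInstance
    | i + 1 => inferInstance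
  projective
    | 0 => inferInstance
    | i + 1 => inferInstance
  d
    | 0 => (ker π).subtype ∘ₗ P.ε
    | i + 1 => P.d i
  ε := π
  surjective_ε := hπ
  exact_zero := by
    rw [exact_iff, range_comp, range_eq_top.mpr P.surjective_ε, Submodule.map_top,
      Submodule.range_subtype]
  exact_succ
    | 0 => P.exact_zero.comp_injective _ (Submodule.injective_subtype _) (map_zero _)
    | i + 1 => P.exact_succ i

theorem isFP (P : ProjResolution R M) {n : ℕ} (h : ∀ i ≤ n, Module.Finite R (P.F i)) :
    IsFP R n M := by
  induction n generalizing M with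
  | zero =>
    have := h 0 le_rfl
    exact Module.Finite.of_surjective P.ε P.surjective_ε
  | succ n ih =>
    exact ⟨P.F 0, _, _, P.ε, h 0 (by omega), inferInstance, P.surjective_ε,
      ih P.shift fun i hi => h (i + 1) (by omega)⟩

end

section

variable {R : Type} [Ring R] {M : Type} [AddCommGroup M] [Module R M]

noncomputable def ofProjectiveResolution (P : ProjectiveResolution (ModuleCat.of R M)) :
    ProjResolution R M where
  F i := P.complex.X i
  projective i := (IsProjective.iff_projective _).mpr (P.projective i)
  d i := (P.complex.d (i + 1) i).hom
  ε := (P.π.f 0 ≫ (HomologicalComplex.singleObjXSelf (ComplexShape.down ℕ) 0 _).hom).hom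
  surjective_ε := (ModuleCat.epi_iff_surjective _).mp inferInstance
  exact_zero :=
    ((ShortComplex.ShortExact.moduleCat_exact_iff_function_exact _).mp P.exact₀).comp_injective
      (HomologicalComplex.singleObjXSelf (ComplexShape.down ℕ) 0 (ModuleCat.of R M)).hom
      ((ModuleCat.mono_iff_injective _).mp inferInstance) (map_zero _)
  exact_succ i := (ShortComplex.ShortExact.moduleCat_exact_iff_function_exact _).mp (P.exact_succ i)

noncomputable def complex (P : ProjResolution R M) : ChainComplex (ModuleCat R) ℕ :=
  ChainComplex.of (fun i => ModuleCat.of R (P.F i)) (fun i => ModuleCat.ofHom (P.d i))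
    (fun i => ModuleCat.hom_ext (P.exact_succ i).linearMap_comp_eq_zero)

theorem complex_d (P : ProjResolution R M) (i : ℕ) :
    P.complex.d (i + 1) i = ModuleCat.ofHom (P.d i) :=
  ChainComplex.of_d (fun i => ModuleCat.of R (P.F i)) (fun i => ModuleCat.ofHom (P.d i)) i

noncomputable def toSingle₀ (P : ProjResolution R M) :
    P.complex ⟶ (ChainComplex.single₀ (ModuleCat R)).obj (ModuleCat.of R M) :=
  (ChainComplex.toSingle₀Equiv _ _).symm ⟨ModuleCat.ofHom P.ε, by
    rw [complex_d]
    exact ModuleCat.hom_ext P.exact_zero.linearMap_comp_eq_zero⟩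

theorem toSingle₀_f_zero (P : ProjResolution R M) : P.toSingle₀.f 0 = ModuleCat.ofHom P.ε :=
  ChainComplex.toSingle₀Equiv_symm_apply_f_zero _ _

noncomputable def toProjectiveResolution (P : ProjResolution R M) :
    ProjectiveResolution (ModuleCat.of R M) where
  complex := P.complex
  projective n := (IsProjective.iff_projective _).mp (P.projective n)
  π := P.toSingle₀
  quasiIso := ⟨fun n => by
    cases n with
    | zero =>
      rw [ChainComplex.quasiIsoAt₀_iff, ShortComplex.quasiIso_iff_of_zeros']
      · refine ⟨(ShortComplex.ShortExact.moduleCat_exact_iff_function_exact _).mpr ?_, ?_⟩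
        · change Function.Exact (P.complex.d 1 0).hom (P.toSingle₀.f 0).hom
          rw [complex_d, toSingle₀_f_zero]
          exact P.exact_zero
        · change Epi (P.toSingle₀.f 0)
          rw [toSingle₀_f_zero]
          exact (ModuleCat.epi_iff_surjective _).mpr P.surjective_ε
      all_goals rfl
    | succ n =>
      rw [quasiIsoAt_iff_exactAt']
      · rw [HomologicalComplex.exactAt_iff' _ (n + 2) (n + 1) n (by simp) (by simp),
          ShortComplex.ShortExact.moduleCat_exact_iff_function_exact]
        change Function.Exact (P.complex.d (n + 2) (n + 1)).hom (P.complex.d (n + 1) n).hom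
        rw [complex_d, complex_d]
        exact P.exact_succ n
      · exact ChainComplex.exactAt_succ_single_obj _ _⟩

end

end ProjResolution

end Module

theorem Module.IsFP.exists_projResolution {R : Type} [Ring R] {M : Type} [AddCommGroup M]
    [Module R M] {n : ℕ} (h : IsFP R n M) :
    ∃ P : ProjResolution R M, ∀ i ≤ n, Module.Finite R (P.F i) := by
  induction n generalizing M with
  | zero =>
    have : Module.Finite R M := h
    obtain ⟨k, π, hπ⟩ := Module.Finite.exists_fin' R M
    refine ⟨.cons π hπ (.ofProjectiveResolution (projectiveResolution (ModuleCat.of R (ker π)))),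
      fun i hi => ?_⟩
    obtain rfl : i = 0 := by omega
    exact inferInstanceAs (Module.Finite R (Fin k → R))
  | succ n ih =>
    obtain ⟨F, _, _, π, hF, _, hπ, hK⟩ := h
    obtain ⟨P, hP⟩ := ih hK
    refine ⟨.cons π hπ P, ?_⟩
    rintro (_ | i) hi
    · exact hF
    · exact hP i (by omega)

theorem ModuleCat.isFP_natCast_iff {R : Type} [Ring R] {M : Type} [AddCommGroup M] [Module R M]
    (n : ℕ) : ModuleCat.IsFP R n (ModuleCat.of R M) ↔ Module.IsFP R n M := by
  constructor
  · rintro ⟨P, hP⟩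
    exact (Module.ProjResolution.ofProjectiveResolution P).isFP fun i hi =>
      hP i (by exact_mod_cast hi)
  · intro h
    obtain ⟨P, hP⟩ := h.exists_projResolution
    exact ⟨P.toProjectiveResolution, fun i hi => hP i (by exact_mod_cast hi)⟩

/-- Lemma 4: let `𝒬 : ⋯ → Q i →^{dᵢ} Q (i-1) → ⋯ → Q 0 →^{d₀} V → 0` be a (not necessarily
exact) complex of `R`-modules with `d₀` surjective, `Q i` of type `FP (m - i)` for all
`0 ≤ i ≤ m`, and with homology `Hᵢ(𝒬)` of type `FP (m - i - 1)` for all `0 ≤ i ≤ m - 1`.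
Then `V` is of type `FP m`.

Here `q i : Q (i+1) → Q i` is the paper'"'"'s `d_{i+1}` and `ε : Q 0 → V` is `d₀`;
`H₀(𝒬) = ker ε / im (q 0)` and `H_{i+1}(𝒬) = ker (q i) / im (q (i+1))`. -/
theorem fp_of_complex_with_fp_homology (R : Type) [Ring R] (m : ℕ)
    (Q : ℕ → Type) [∀ i, AddCommGroup (Q i)] [∀ i, Module R (Q i)]
    (V : Type) [AddCommGroup V] [Module R V]
    (q : ∀ i : ℕ, Q (i + 1) →ₗ[R] Q i) (ε : Q 0 →ₗ[R] V)
    (hsurj : Function.Surjective ε)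
    (hc0 : ε ∘ₗ q 0 = 0)
    (hc : ∀ i : ℕ, q i ∘ₗ q (i + 1) = 0)
    (hQ : ∀ i : ℕ, i ≤ m → ModuleCat.IsFP R ((m : ℤ) - i) (ModuleCat.of R (Q i)))
    (hH0 : 1 ≤ m → ModuleCat.IsFP R ((m : ℤ) - 1) (ModuleCat.of R (complexHomology R (q 0) ε)))
    (hH : ∀ i : ℕ, i + 2 ≤ m →
      ModuleCat.IsFP R ((m : ℤ) - (i + 1) - 1)
        (ModuleCat.of R (complexHomology R (q (i + 1)) (q i)))) :
    ModuleCat.IsFP R m (ModuleCat.of R V) := by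
  have toModule : ∀ {X : Type} [AddCommGroup X] [Module R X] {k : ℤ} (n : ℕ), k = n →
      ModuleCat.IsFP R k (ModuleCat.of R X) → Module.IsFP R n X := by
    rintro X _ _ k n rfl h
    exact (ModuleCat.isFP_natCast_iff n).mp h
  refine (ModuleCat.isFP_natCast_iff m).mpr (Module.IsFP.of_complex m q ε hsurj hc0 hc ?_ ?_ ?_)
  · exact fun i hi => toModule _ (by omega) (hQ i hi)
  · exact fun hm => toModule _ (by omega) (hH0 hm)
  · exact fun i hi => toModule _ (by omega) (hH i hi)
end

section
/- Let H and G be groups with H torsion-free, let X be a right G-set, and let Γ = H ≀_X G = H^{(X)} ⋊ G be the permutational wreath product. Then every finite subgroup of Γ is conjugate in Γ to a subgroup of G. -/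
/-- The base group `H^{(X)}` of the permutational wreath product: the subgroup of `X → H`
consisting of finitely supported functions. -/
def restrictedProduct (H X : Type) [Group H] : Subgroup (X → H) where
  carrier := {f | (Function.mulSupport f).Finite}
  one_mem' := by simp [Set.mem_setOf_eq, Function.mulSupport_one]
  mul_mem' := by
    intro f g hf hg
    exact (hf.union hg).subset (Function.mulSupport_mul f g)
  inv_mem' := by
    intro f hf
    simpa [Function.mulSupport_inv] using hf

variable (H X G : Type) [Group H] [Group G] [MulAction G X]

/-- The permutation action of `G` on `X → H` induced by the `G`-action on `X`. -/
def permAut : G →* MulAut (X → H) where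
  toFun g := MulEquiv.arrowCongr (MulAction.toPerm g) (MulEquiv.refl H)
  map_one' := by
    apply MulEquiv.ext
    intro f
    funext x
    simp [MulEquiv.arrowCongr, MulAction.toPerm]
  map_mul' g₁ g₂ := by
    apply MulEquiv.ext
    intro f
    funext x
    simp [MulEquiv.arrowCongr, MulAction.toPerm, mul_smul]

lemma permAut_mem (g : G) {f : X → H} (hf : f ∈ restrictedProduct H X) :
    permAut H X G g f ∈ restrictedProduct H X := by
  have h : Function.mulSupport (permAut H X G g f) =
      (fun x : X => g⁻¹ • x) ⁻¹' Function.mulSupport f :=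
    Function.mulSupport_comp_eq_preimage f fun x => g⁻¹ • x
  show (Function.mulSupport (permAut H X G g f)).Finite
  rw [h]
  exact hf.preimage (MulAction.injective g⁻¹).injOn

/-- The action of `G` on the base group `H^{(X)}` (finitely supported functions `X → H`),
permuting the coordinates via the `G`-action on `X`. -/
def wreathAut : G →* MulAut ↥(restrictedProduct H X) where
  toFun g :=
    { toFun := fun f => ⟨permAut H X G g f, permAut_mem H X G g f.2⟩
      invFun := fun f => ⟨permAut H X G g⁻¹ f, permAut_mem H X G g⁻¹ f.2⟩
      left_inv := fun f => by
        apply Subtype.ext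
        show (permAut H X G g⁻¹) ((permAut H X G g) (f : X → H)) = (f : X → H)
        have h : (permAut H X G g⁻¹) ((permAut H X G g) (f : X → H)) =
            ((permAut H X G g⁻¹) * (permAut H X G g)) (f : X → H) := rfl
        rw [h, ← map_mul, inv_mul_cancel, map_one]
        rfl
      right_inv := fun f => by
        apply Subtype.ext
        show (permAut H X G g) ((permAut H X G g⁻¹) (f : X → H)) = (f : X → H)
        have h : (permAut H X G g) ((permAut H X G g⁻¹) (f : X → H)) =
            ((permAut H X G g) * (permAut H X G g⁻¹)) (f : X → H) := rfl
        rw [h, ← map_mul, mul_inv_cancel, map_one]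
        rfl
      map_mul' := fun a b => by
        apply Subtype.ext
        show permAut H X G g ((a : X → H) * (b : X → H)) = _
        exact map_mul ((permAut H X G) g) _ _ }
  map_one' := by
    apply MulEquiv.ext
    intro f
    apply Subtype.ext
    show (permAut H X G 1) (f : X → H) = (f : X → H)
    rw [map_one]
    rfl
  map_mul' g₁ g₂ := by
    apply MulEquiv.ext
    intro f
    apply Subtype.ext
    show (permAut H X G (g₁ * g₂)) (f : X → H) =
      (permAut H X G g₁) ((permAut H X G g₂) (f : X → H))
    rw [map_mul]
    rfl

/-- The permutational wreath product `H ≀_X G = H^{(X)} ⋊ G`. -/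
def Wreath : Type := (restrictedProduct H X) ⋊[wreathAut H X G] G

instance : Group (Wreath H X G) :=
  inferInstanceAs (Group ((restrictedProduct H X) ⋊[wreathAut H X G] G))

/-- The copy of `G` inside the wreath product `H ≀_X G`. -/
def wreathInr : G →* Wreath H X G := SemidirectProduct.inr


/-! The base coordinates `c k := k.left` of the elements `k` of a finite subgroup `K` form a
crossed homomorphism from `K` to `H^X`. If `k` fixes `x` then `c (k ^ n) x = (c k x) ^ n`, so
`c k x` has finite order and is trivial because `H` is torsion-free. Hence
`f y := (c k y)⁻¹`, for any `k ∈ K` carrying a chosen representative of the `K`-orbit of `y`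
to `y`, is well defined (this is Shapiro's lemma in disguise). It is finitely supported because
`K` is finite, and conjugation by `f ∈ H^{(X)}` kills all base coordinates of `K`. -/

open MulAction SemidirectProduct

namespace MulAction

variable {K X H : Type*} [Group K] [MulAction K X] [Group H]

def IsCocycle (c : K → X → H) : Prop :=
  ∀ k₁ k₂ x, c (k₁ * k₂) x = c k₁ x * c k₂ (k₁⁻¹ • x)

theorem exists_smul_out_mk_eq (y : X) :
    ∃ g : K, g • (⟦y⟧ : orbitRel.Quotient K X).out = y := by
  obtain ⟨k, hk⟩ := orbitRel_apply.mp (Quotient.mk_out (s := orbitRel K X) y)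
  exact ⟨k⁻¹, by rw [← hk, inv_smul_smul]⟩

namespace IsCocycle

variable {c : K → X → H}

theorem one_apply (hc : IsCocycle c) (x : X) : c 1 x = 1 := by
  simpa using hc 1 1 x

theorem pow_apply_of_smul_eq (hc : IsCocycle c) {k : K} {x : X} (hx : k • x = x) (n : ℕ) :
    c (k ^ n) x = c k x ^ n := by
  induction n with
  | zero => simp [hc.one_apply]
  | succ n ih =>
    have hx' : (k ^ n)⁻¹ • x = x := (stabilizer K x).inv_mem ((stabilizer K x).pow_mem hx n)
    rw [pow_succ, hc, hx', ih, pow_succ]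

theorem apply_eq_one_of_smul_eq (hc : IsCocycle c) (hH : ∀ h : H, h ≠ 1 → ¬IsOfFinOrder h)
    {k : K} (hk : IsOfFinOrder k) {x : X} (hx : k • x = x) : c k x = 1 := by
  by_contra hne
  obtain ⟨n, hn, hkn⟩ := isOfFinOrder_iff_pow_eq_one.mp hk
  refine hH _ hne (isOfFinOrder_iff_pow_eq_one.mpr ⟨n, hn, ?_⟩)
  rw [← hc.pow_apply_of_smul_eq hx, hkn, hc.one_apply]

theorem apply_smul_eq_of_smul_eq (hc : IsCocycle c) (hstab : ∀ k x, k • x = x → c k x = 1)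
    {g g' : K} {x : X} (h : g • x = g' • x) : c g (g • x) = c g' (g • x) := by
  have hfix : (g'⁻¹ * g) • x = x := by rw [mul_smul, h, inv_smul_smul]
  calc c g (g • x) = c (g' * (g'⁻¹ * g)) (g • x) := by rw [mul_inv_cancel_left]
    _ = c g' (g • x) := by rw [hc, h, inv_smul_smul, hstab _ _ hfix, mul_one]

theorem exists_coboundary (hc : IsCocycle c) (hstab : ∀ k x, k • x = x → c k x = 1) :
    ∃ f : X → H, (∀ k x, f (k⁻¹ • x) = f x * c k x) ∧
      Function.mulSupport f ⊆ ⋃ k, Function.mulSupport (c k) := by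
  choose g hg using exists_smul_out_mk_eq (K := K) (X := X)
  have hg_unique :
      ∀ y (k : K), k • (⟦y⟧ : orbitRel.Quotient K X).out = y → c (g y) y = c k y := by
    intro y k hk
    have h := hc.apply_smul_eq_of_smul_eq hstab ((hg y).trans hk.symm)
    rwa [hg y] at h
  refine ⟨fun y => (c (g y) y)⁻¹, fun k x => ?_, fun y hy => ?_⟩
  · have hclass : (⟦k⁻¹ • x⟧ : orbitRel.Quotient K X) = ⟦x⟧ :=
      Quotient.sound (mem_orbit x k⁻¹)
    have hmove :
        (k⁻¹ * g x) • (⟦k⁻¹ • x⟧ : orbitRel.Quotient K X).out = k⁻¹ • x := by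
      rw [hclass, mul_smul, hg x]
    have hsplit : c (g x) x = c k x * c (k⁻¹ * g x) (k⁻¹ • x) := by
      rw [← hc, mul_inv_cancel_left]
    dsimp only
    rw [hg_unique _ _ hmove, hsplit, mul_inv_rev, inv_mul_cancel_right]
  · exact Set.mem_iUnion.mpr ⟨g y, fun h => hy (by simp [h])⟩

end IsCocycle
end MulAction

section WreathProduct

variable {H X G : Type} [Group H] [Group G] [MulAction G X]

theorem wreath_left_mul_apply (w₁ w₂ : restrictedProduct H X ⋊[wreathAut H X G] G) (x : X) :
    ((w₁ * w₂).left : X → H) x =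
      (w₁.left : X → H) x * (w₂.left : X → H) (w₁.right⁻¹ • x) :=
  rfl

theorem wreathAut_apply (g : G) (F : restrictedProduct H X) (x : X) :
    (wreathAut H X G g F : X → H) x = (F : X → H) (g⁻¹ • x) :=
  rfl

theorem conj_inl_mem_range_inr (F : restrictedProduct H X)
    (w : restrictedProduct H X ⋊[wreathAut H X G] G)
    (hF : ∀ x, (F : X → H) (w.right⁻¹ • x) = (F : X → H) x * (w.left : X → H) x) :
    MulAut.conj (inl F) w ∈ inr.range := by
  have hleft : (MulAut.conj (inl F) w).left = 1 := by
    ext x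
    simp [MulAut.conj_apply, wreathAut_apply, hF]
  refine ⟨(MulAut.conj (inl F) w).right, ?_⟩
  conv_rhs => rw [← inl_left_mul_inr_right (MulAut.conj (inl F) w), hleft, map_one, one_mul]

end WreathProduct

/-- Theorem (finite subgroups of wreath products): let `H` and `G` be groups with `H`
torsion-free, let `X` be a `G`-set, and let `Γ = H ≀_X G` be the permutational wreath
product.  Then every finite subgroup of `Γ` is conjugate in `Γ` to a subgroup of `G`. -/
theorem finite_subgroup_of_wreath_conjugate_into_top_group
    (hH : ∀ h : H, h ≠ 1 → ¬IsOfFinOrder h)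
    (K : Subgroup (Wreath H X G)) (hK : Finite K) :
    ∃ δ : Wreath H X G,
      K.map (MulAut.conj δ).toMonoidHom ≤ (wreathInr H X G).range := by
  let _ : MulAction K X := MulAction.compHom X ((rightHom (φ := wreathAut H X G)).comp K.subtype)
  let c : K → restrictedProduct H X := fun k => left (φ := wreathAut H X G) (k : Wreath H X G)
  have hc : IsCocycle fun k x => (c k : X → H) x := fun k₁ k₂ x => wreath_left_mul_apply _ _ x
  obtain ⟨f, hf, hsupp⟩ := hc.exists_coboundary fun k x hx =>
    hc.apply_eq_one_of_smul_eq hH (isOfFinOrder_of_finite k) hx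
  let F : restrictedProduct H X := ⟨f, (Set.finite_iUnion fun k => (c k).2).subset hsupp⟩
  refine ⟨inl F, ?_⟩
  rintro _ ⟨k, hk, rfl⟩
  exact conj_inl_mem_range_inr F k (hf ⟨k, hk⟩)
end

section
/- Let Γ = H ≀_X G be a permutational wreath product and K a finite subgroup of G. Then the centralizer of K in Γ decomposes as C_Γ(K) = C_M(K) ⋊ C_G(K), and this group is isomorphic to the wreath product H ≀_{K\X} C_G(K), where M = H^{(X)} is the base group and K\X denotes the set of K-orbits on X. -/
variable (H X G : Type) [Group H] [Group G] [MulAction G X]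

/-- For `K` a subgroup of `G`, the centralizer `C_G(K)` acts naturally on the set `K\X` of
`K`-orbits on `X`. -/
instance centralizerQuotientAction (K : Subgroup G) :
    MulAction ↥(Subgroup.centralizer (K : Set G)) (Quotient (MulAction.orbitRel K X)) where
  smul c := Quotient.map (fun x => (c : G) • x) (by
    intro a b hab
    obtain ⟨k, hk⟩ := hab
    refine ⟨k, ?_⟩
    have hc := (Subgroup.mem_centralizer_iff.1 c.2) (k : G) k.2
    show (k : G) • ((c : G) • b) = (c : G) • a
    rw [← hk]
    show (k : G) • ((c : G) • b) = (c : G) • ((k : G) • b)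
    rw [smul_smul, smul_smul, hc])
  one_smul q := by
    induction q using Quotient.inductionOn with
    | h x => exact congrArg (Quotient.mk _) (one_smul G x)
  mul_smul c₁ c₂ q := by
    induction q using Quotient.inductionOn with
    | h x =>
      show Quotient.mk _ (((c₁ : G) * (c₂ : G)) • x) = _
      rw [mul_smul]
      rfl

section QuotientSupport

open Function MulAction

lemma mulSupport_quotient_lift {α M : Type*} [One M] {s : Setoid α} (f : α → M)
    (hf : ∀ a b, s a b → f a = f b) :
    mulSupport (Quotient.lift f hf) = Quotient.mk s '' mulSupport f := by
  ext q
  constructor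
  · induction q using Quotient.inductionOn with
    | h a => exact fun ha => ⟨a, ha, rfl⟩
  · rintro ⟨a, ha, rfl⟩
    exact ha

lemma finite_preimage_orbitRel_mk {M α : Type*} [Group M] [Finite M] [MulAction M α]
    (q : Quotient (orbitRel M α)) : (Quotient.mk (orbitRel M α) ⁻¹' {q}).Finite := by
  induction q using Quotient.inductionOn with
  | h a =>
    have hfibre : Quotient.mk (orbitRel M α) ⁻¹' {Quotient.mk _ a} = orbit M a := by
      ext b
      exact Quotient.eq
    rw [hfibre]
    exact Finite.finite_mulAction_orbit a

lemma finite_mulSupport_comp_orbitRel_mk {M α β : Type*} [Group M] [Finite M] [MulAction M α]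
    [One β] {F : Quotient (orbitRel M α) → β} (hF : (mulSupport F).Finite) :
    (mulSupport (F ∘ Quotient.mk (orbitRel M α))).Finite := by
  rw [mulSupport_comp_eq_preimage]
  exact hF.preimage' fun q _ => finite_preimage_orbitRel_mk q

end QuotientSupport

lemma SemidirectProduct.mem_centralizer_map_inr_iff {N Q : Type*} [Group N] [Group Q]
    {φ : Q →* MulAut N} (K : Subgroup Q) (γ : N ⋊[φ] Q) :
    γ ∈ Subgroup.centralizer ((K.map (inr : Q →* N ⋊[φ] Q)) : Set (N ⋊[φ] Q)) ↔
      (∀ k : K, φ k γ.left = γ.left) ∧ γ.right ∈ Subgroup.centralizer (K : Set Q) := by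
  simp only [Subgroup.mem_centralizer_iff, Subgroup.coe_map, Set.forall_mem_image,
    SetLike.mem_coe, SemidirectProduct.ext_iff, mul_left, mul_right, left_inr, right_inr,
    map_one, one_mul, mul_one, Subtype.forall]
  exact ⟨fun h => ⟨fun _ hk => (h hk).1, fun _ hk => (h hk).2⟩,
    fun h _ hk => ⟨h.1 _ hk, h.2 _ hk⟩⟩

section OrbitFunctions

variable {H X G : Type} [Group H] [Group G] [MulAction G X] {K : Subgroup G}

lemma mem_restrictedProduct_iff {f : X → H} :
    f ∈ restrictedProduct H X ↔ (Function.mulSupport f).Finite :=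
  Iff.rfl

lemma wreathAut_apply_coe (g : G) (f : restrictedProduct H X) (x : X) :
    (wreathAut H X G g f : X → H) x = (f : X → H) (g⁻¹ • x) :=
  rfl

lemma forall_wreathAut_eq_self_iff (f : restrictedProduct H X) :
    (∀ k : K, wreathAut H X G k f = f) ↔
      ∀ x y, MulAction.orbitRel K X x y → (f : X → H) x = (f : X → H) y := by
  constructor
  · rintro h _ y ⟨k, rfl⟩
    have hy := congrFun (congrArg Subtype.val (h k⁻¹)) y
    rwa [wreathAut_apply_coe, Subgroup.coe_inv, inv_inv] at hy
  · intro h k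
    exact Subtype.ext (funext fun x => h _ x ⟨k⁻¹, rfl⟩)

def descendToOrbits (f : restrictedProduct H X) (hf : ∀ k : K, wreathAut H X G k f = f) :
    restrictedProduct H (Quotient (MulAction.orbitRel K X)) :=
  ⟨Quotient.lift f ((forall_wreathAut_eq_self_iff f).1 hf), by
    rw [mem_restrictedProduct_iff, mulSupport_quotient_lift]
    exact (mem_restrictedProduct_iff.1 f.2).image _⟩

variable (K) in
def pullbackFromOrbits [Finite K] (F : restrictedProduct H (Quotient (MulAction.orbitRel K X))) :
    restrictedProduct H X :=
  ⟨F.1 ∘ Quotient.mk _, finite_mulSupport_comp_orbitRel_mk (mem_restrictedProduct_iff.1 F.2)⟩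

lemma wreathAut_pullbackFromOrbits [Finite K]
    (F : restrictedProduct H (Quotient (MulAction.orbitRel K X))) (k : K) :
    wreathAut H X G k (pullbackFromOrbits K F) = pullbackFromOrbits K F :=
  (forall_wreathAut_eq_self_iff (pullbackFromOrbits K F)).2
    (fun _ _ hxy => congrArg F.1 (Quotient.sound hxy)) k

end OrbitFunctions

open SemidirectProduct in
def centralizerMulEquivWreath {H X G : Type} [Group H] [Group G] [MulAction G X]
    (K : Subgroup G) [Finite K] :
    Subgroup.centralizer ((K.map (inr : G →* restrictedProduct H X ⋊[wreathAut H X G] G)) :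
        Set (restrictedProduct H X ⋊[wreathAut H X G] G)) ≃*
      restrictedProduct H (Quotient (MulAction.orbitRel K X))
        ⋊[wreathAut H (Quotient (MulAction.orbitRel K X)) (Subgroup.centralizer (K : Set G))]
        Subgroup.centralizer (K : Set G) where
  toFun γ :=
    have hγ := (mem_centralizer_map_inr_iff K γ.1).1 γ.2
    ⟨descendToOrbits γ.1.left hγ.1, ⟨γ.1.right, hγ.2⟩⟩
  invFun p := ⟨⟨pullbackFromOrbits K p.left, p.right⟩,
    (mem_centralizer_map_inr_iff K _).2 ⟨wreathAut_pullbackFromOrbits p.left, p.right.2⟩⟩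
  left_inv _ := rfl
  right_inv _ :=
    SemidirectProduct.ext (Subtype.ext (funext fun q => q.inductionOn fun _ => rfl)) rfl
  map_mul' _ _ :=
    SemidirectProduct.ext (Subtype.ext (funext fun q => q.inductionOn fun _ => rfl)) rfl

/-- Theorem (centralizers in wreath products): let `Γ = H ≀_X G` be a permutational wreath
product and `K` a finite subgroup of `G`.  Then the centralizer of `K` in `Γ` decomposes as
`C_Γ(K) = C_M(K) ⋊ C_G(K)` (where `M = H^{(X)}` is the base group), and it is isomorphic to
the wreath product `H ≀_{K\X} C_G(K)`. -/
theorem centralizer_in_wreath (K : Subgroup G) (hKfin : Finite K) :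
    (∀ γ : (restrictedProduct H X) ⋊[wreathAut H X G] G,
        γ ∈ Subgroup.centralizer ((K.map (SemidirectProduct.inr :
            G →* (restrictedProduct H X) ⋊[wreathAut H X G] G)) :
          Set ((restrictedProduct H X) ⋊[wreathAut H X G] G)) ↔
          (∀ k : K, wreathAut H X G (k : G) γ.left = γ.left) ∧
            γ.right ∈ Subgroup.centralizer (K : Set G)) ∧
      Nonempty
        ((Subgroup.centralizer ((K.map (SemidirectProduct.inr :
            G →* (restrictedProduct H X) ⋊[wreathAut H X G] G)) :
          Set ((restrictedProduct H X) ⋊[wreathAut H X G] G))) ≃*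
          ((restrictedProduct H (Quotient (MulAction.orbitRel K X)))
            ⋊[wreathAut H (Quotient (MulAction.orbitRel K X))
                ↥(Subgroup.centralizer (K : Set G))]
            ↥(Subgroup.centralizer (K : Set G)))) :=
  ⟨SemidirectProduct.mem_centralizer_map_inr_iff K, ⟨centralizerMulEquivWreath K⟩⟩
end

section
/- Let G be a group, w an element of a semi-induced ZG-module with stabilizer G₀ = Stab_G(w), and suppose there exists t ∈ G with t·w = −w. Then t² ∈ G₀, the subgroup K₀ = ⟨G₀, t⟩ contains G₀ as a normal subgroup of index 2, and the cyclic ZG-submodule generated by w is isomorphic to ZG ⊗_{ZK₀} V₀, where V₀ ≅ Z as an abelian group, G₀ acts trivially on V₀, and K₀/G₀ acts by −1. -/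
/-!
Every element of `K₀ = ⟨G₀, t⟩` sends `w` to `±w`, and `w ≠ -w` because `w` is a basis vector of
a free `ℤ`-module; so `k ↦ (k • w = w)` splits `K₀` into the two cosets `G₀` and `G₀ t`.
For the universal property, the orbit `G • w` consists of signed basis vectors, so prescribing
`g • w ↦ g • p` on it defines a linear map on `S`; this is consistent exactly because `G₀` fixes
`p` and `t` negates it. Uniqueness and equivariance hold because the orbit spans `W`.
-/

variable {G : Type} [Group G] {S : Type} [AddCommGroup S] [Module ℤ S]

def repStabilizer (ρ : Representation ℤ G S) (w : S) : Subgroup G where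
  carrier := {g | ρ g w = w}
  one_mem' := by simp
  mul_mem' := by
    intro a b ha hb
    simp only [Set.mem_setOf_eq] at *
    rw [map_mul, Module.End.mul_apply, hb, ha]
  inv_mem' := by
    intro a ha
    simp only [Set.mem_setOf_eq] at *
    calc ρ a⁻¹ w = ρ a⁻¹ (ρ a w) := by rw [ha]
    _ = ρ (a⁻¹ * a) w := by rw [map_mul]; rfl
    _ = w := by simp

theorem Module.Basis.ne_neg {R M ι : Type*} [Ring R] [NeZero (2 : R)] [AddCommGroup M]
    [Module R M] (B : Module.Basis ι R M) (i : ι) : B i ≠ -B i := by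
  intro h
  have h1 : (1 : R) = -1 := by simpa using congrArg (fun x => B.repr x i) h
  exact two_ne_zero (one_add_one_eq_two.symm.trans (eq_neg_iff_add_eq_zero.mp h1))

theorem Module.Basis.exists_linearMap_apply_eq {R M N ι α : Type*} [CommRing R]
    [AddCommGroup M] [Module R M] [AddCommGroup N] [Module R N] (B : Module.Basis ι R M)
    {v : α → M} {q : α → N} (hv : ∀ a, ∃ j, v a = B j ∨ v a = -B j)
    (hq : ∀ a b, v a = v b → q a = q b) (hq_neg : ∀ a b, v a = -v b → q a = -q b) :
    ∃ F : M →ₗ[R] N, ∀ a, F (v a) = q a := by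
  classical
  let c : ι → N := fun j =>
    if h : ∃ a, v a = B j then q h.choose
    else if h' : ∃ a, v a = -B j then -q h'.choose else 0
  refine ⟨B.constr R c, fun a => ?_⟩
  obtain ⟨j, hj | hj⟩ := hv a
  · have h : ∃ b, v b = B j := ⟨a, hj⟩
    rw [hj, B.constr_basis]
    simp only [c, dif_pos h]
    exact hq _ _ (h.choose_spec.trans hj.symm)
  · rw [hj, map_neg, B.constr_basis]
    by_cases h : ∃ b, v b = B j
    · simp only [c, dif_pos h]
      rw [hq_neg a h.choose (by rw [hj, h.choose_spec])]
    · have h' : ∃ b, v b = -B j := ⟨a, hj⟩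
      simp only [c, dif_neg h, dif_pos h', neg_neg]
      exact hq _ _ (h'.choose_spec.trans hj.symm)

theorem Submodule.linearMap_ext_span_range {R M N α : Type*} [CommRing R] [AddCommGroup M]
    [Module R M] [AddCommGroup N] [Module R N] {v : α → M}
    {f g : Submodule.span R (Set.range v) →ₗ[R] N}
    (h : ∀ a, f ⟨v a, Submodule.subset_span ⟨a, rfl⟩⟩ = g ⟨v a, Submodule.subset_span ⟨a, rfl⟩⟩) :
    f = g :=
  LinearMap.ext_on Submodule.span_span_coe_preimage (by rintro ⟨_, _⟩ ⟨a, rfl⟩; exact h a)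

theorem Representation.existsUnique_equivariant_of_span_orbit {R M N : Type*} [CommRing R]
    [AddCommGroup M] [Module R M] [AddCommGroup N] [Module R N]
    (ρ : Representation R G M) (σ : Representation R G N) {w : M} {p : N} {F : M →ₗ[R] N}
    (hF : ∀ g, F (ρ g w) = σ g p) :
    ∃! f : ↥(Submodule.span R (Set.range fun g => ρ g w)) →ₗ[R] N,
      f ⟨w, Submodule.subset_span ⟨1, by simp⟩⟩ = p ∧
      ∀ (g : G) (x : ↥(Submodule.span R (Set.range fun g => ρ g w)))
        (hgx : ρ g (x : M) ∈ Submodule.span R (Set.range fun g => ρ g w)),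
        f ⟨ρ g (x : M), hgx⟩ = σ g (f x) := by
  set W := Submodule.span R (Set.range fun g => ρ g w)
  have hw : w ∈ W := Submodule.subset_span ⟨1, by simp⟩
  have hF_comm (g : G) : (F ∘ₗ ρ g).domRestrict W = (σ g ∘ₗ F).domRestrict W :=
    Submodule.linearMap_ext_span_range fun a => by
      simp [hF, ← Module.End.mul_apply, ← map_mul]
  refine ⟨F.domRestrict W, ⟨by simpa using hF 1, fun g x _ => LinearMap.congr_fun (hF_comm g) x⟩,
    fun f ⟨hf₁, hf₂⟩ => Submodule.linearMap_ext_span_range fun a => ?_⟩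
  exact (hf₂ a ⟨w, hw⟩ _).trans (by rw [hf₁, LinearMap.domRestrict_apply, hF])

variable {ρ : Representation ℤ G S} {w : S}

theorem mem_repStabilizer {g : G} : g ∈ repStabilizer ρ w ↔ ρ g w = w := Iff.rfl

theorem sq_mem_repStabilizer {t : G} (ht : ρ t w = -w) : t ^ 2 ∈ repStabilizer ρ w := by
  rw [mem_repStabilizer, pow_two, map_mul, Module.End.mul_apply, ht, map_neg, ht, neg_neg]

theorem apply_eq_or_eq_neg_of_mem_closure {t k : G} (ht : ρ t w = -w)
    (hk : k ∈ Subgroup.closure ((repStabilizer ρ w : Set G) ∪ {t})) :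
    ρ k w = w ∨ ρ k w = -w := by
  induction hk using Subgroup.closure_induction with
  | mem x hx =>
    rcases hx with hx | rfl
    · exact Or.inl hx
    · exact Or.inr ht
  | one => simp
  | mul x y _ _ ihx ihy =>
    rcases ihx with ihx | ihx <;> rcases ihy with ihy | ihy <;>
      simp [Module.End.mul_apply, ihx, ihy]
  | inv x _ ihx =>
    have hx := ρ.inv_self_apply x w
    rcases ihx with ihx | ihx <;> rw [ihx] at hx
    · exact Or.inl hx
    · exact Or.inr (by rw [map_neg] at hx; exact neg_eq_iff_eq_neg.mp hx)

theorem index_repStabilizer_subgroupOf_eq_two {K : Subgroup G}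
    (hK : ∀ k ∈ K, ρ k w = w ∨ ρ k w = -w) {t : G} (htK : t ∈ K) (ht : ρ t w = -w)
    (hw : w ≠ -w) : ((repStabilizer ρ w).subgroupOf K).index = 2 := by
  refine Subgroup.index_eq_two_iff.mpr ⟨⟨t, htK⟩, fun k => ?_⟩
  simp only [Subgroup.mem_subgroupOf, Subgroup.coe_mul, mem_repStabilizer, map_mul,
    Module.End.mul_apply, ht, map_neg, neg_eq_iff_eq_neg]
  rcases hK k k.2 with h | h <;> simp [h, hw, hw.symm]

section Compatibility

variable {N : Type} [AddCommGroup N] [Module ℤ N] {σ : Representation ℤ G N} {p : N}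

theorem apply_eq_apply_of_apply_eq_apply (hp : ∀ g ∈ repStabilizer ρ w, σ g p = p) {a b : G}
    (h : ρ a w = ρ b w) : σ a p = σ b p := by
  have hba : b⁻¹ * a ∈ repStabilizer ρ w := by
    rw [mem_repStabilizer, map_mul, Module.End.mul_apply, h, ρ.inv_self_apply]
  calc σ a p = σ b (σ (b⁻¹ * a) p) := by
        rw [← Module.End.mul_apply, ← map_mul, mul_inv_cancel_left]
    _ = σ b p := by rw [hp _ hba]

theorem apply_eq_neg_apply_of_apply_eq_neg_apply (hp : ∀ g ∈ repStabilizer ρ w, σ g p = p)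
    {t : G} (ht : ρ t w = -w) (hpt : σ t p = -p) {a b : G} (h : ρ a w = -ρ b w) :
    σ a p = -σ b p := by
  have hbt : ρ a w = ρ (b * t) w := by rw [map_mul, Module.End.mul_apply, ht, map_neg, h]
  rw [apply_eq_apply_of_apply_eq_apply hp hbt, map_mul, Module.End.mul_apply, hpt, map_neg]

end Compatibility

/-- Lemma (structure of cyclic semi-induced modules): let `S` be a semi-induced `ℤG`-module
with `ℤ`-basis indexed by `ι` (so `G` permutes the basis vectors up to sign), let `w` be a
basis element with stabilizer `G₀`, and suppose `t • w = −w` for some `t ∈ G`.  Then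
`t² ∈ G₀`, the subgroup `K₀ = ⟨G₀, t⟩` contains `G₀` as a normal subgroup of index `2`, and
the cyclic `ℤG`-submodule `W` generated by `w` is isomorphic to `ℤG ⊗_{ℤK₀} V₀`, where
`V₀ ≅ ℤ` as an abelian group, `G₀` acts trivially on `V₀` and `K₀/G₀` acts by `−1`.  The last
isomorphism is expressed by the universal property of the induced module `ℤG ⊗_{ℤK₀} V₀`:
for every `G`-representation `P` and every vector `p ∈ P` on which `G₀` acts trivially and
`t` acts by `−1` (i.e. every `K₀`-map `V₀ → P`), there is a unique `ℤ`-linear `G`-equivariant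
map `W → P` sending `w` to `p`. -/
theorem cyclic_semiInduced_structure
    (ρ : Representation ℤ G S) (ι : Type) (B : Module.Basis ι ℤ S)
    (hsemi : ∀ (g : G) (i : ι), ∃ j : ι, ρ g (B i) = B j ∨ ρ g (B i) = -(B j))
    (i₀ : ι) (w : S) (hw : w = B i₀) (t : G) (ht : ρ t w = -w) :
    t ^ 2 ∈ repStabilizer ρ w ∧
    ((repStabilizer ρ w).subgroupOf
        (Subgroup.closure ((repStabilizer ρ w : Set G) ∪ {t}))).Normal ∧
    ((repStabilizer ρ w).subgroupOf
        (Subgroup.closure ((repStabilizer ρ w : Set G) ∪ {t}))).index = 2 ∧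
    (∀ (P : Type) [AddCommGroup P] [Module ℤ P] (σ : Representation ℤ G P) (p : P),
      (∀ g ∈ repStabilizer ρ w, σ g p = p) → σ t p = -p →
      ∃! f : ↥(Submodule.span ℤ (Set.range fun g => ρ g w)) →ₗ[ℤ] P,
        f ⟨w, by exact Submodule.subset_span ⟨1, by simp⟩⟩ = p ∧
        ∀ (g : G) (x : ↥(Submodule.span ℤ (Set.range fun g => ρ g w)))
          (hgx : ρ g (x : S) ∈ Submodule.span ℤ (Set.range fun g => ρ g w)),
          f ⟨ρ g (x : S), hgx⟩ = σ g (f x)) := by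
  have hindex := index_repStabilizer_subgroupOf_eq_two
    (fun k hk => apply_eq_or_eq_neg_of_mem_closure ht hk)
    (Subgroup.subset_closure (Or.inr rfl)) ht (hw ▸ B.ne_neg i₀)
  refine ⟨sq_mem_repStabilizer ht, Subgroup.normal_of_index_eq_two hindex, hindex, ?_⟩
  intro P _ _ σ p hp hpt
  obtain ⟨F, hF⟩ := B.exists_linearMap_apply_eq (v := fun g => ρ g w) (q := fun g => σ g p)
    (fun g => hw ▸ hsemi g i₀) (fun _ _ => apply_eq_apply_of_apply_eq_apply hp)
    (fun _ _ => apply_eq_neg_apply_of_apply_eq_neg_apply hp ht hpt)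
  -- The statement gives `W` the `ℤ`-module structure of an additive group; it is the submodule
  -- structure only once `S` carries its canonical `ℤ`-module structure too.
  rename_i instS _ _
  obtain rfl : instS = AddCommGroup.toIntModule S := Subsingleton.elim _ _
  exact ρ.existsUnique_equivariant_of_span_orbit σ hF
end
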